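/- arXiv:2307.08920 — 4 statements merged into one kernel-verified Lean document; each statement's English description precedes it below -/
import Mathlib

section
/- Let A − B K_i be Hurwitz and let P_i be the unique symmetric positive definite solution of the algebraic Lyapunov equation (A − B K_i)^T P_i + P_i (A − B K_i) + K_i^T R K_i + Q = 0, with K_{i+1} = R^{-1} B^T P_i. Then A − B K_{i+1} is Hurwitz. -/
/-! Completing the square with `R Kᵢ₊₁ = Bᵀ Pᵢ` turns the Lyapunov equation of `Kᵢ` into one for
`Kᵢ₊₁` with the same `Pᵢ`:
`(A - B Kᵢ₊₁)ᵀ Pᵢ + Pᵢ (A - B Kᵢ₊₁) + Q + Kᵢ₊₁ᵀ R Kᵢ₊₁ + (Kᵢ - Kᵢ₊₁)ᵀ R (Kᵢ - Kᵢ₊₁) = 0`.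
Evaluating it at an eigenvector `v` of `A - B Kᵢ₊₁` with eigenvalue `μ` gives
`2 Re μ · v* Pᵢ v = -v* (Q + …) v ≤ 0`. If `Re μ ≥ 0`, every positive semidefinite term must
vanish at `v`, so `Kᵢ₊₁ v = 0` and `Q^{1/2} v = 0`; then `v` is an eigenvector of `A` with
`Re μ ≥ 0` in the kernel of `Q^{1/2}`, contradicting detectability. -/

open Matrix

/-- `A` is Hurwitz: every (complex) eigenvalue has strictly negative real part. -/
def IsHurwitz {n : ℕ} (A : Matrix (Fin n) (Fin n) ℝ) : Prop :=
  ∀ μ ∈ spectrum ℂ (A.map (algebraMap ℝ ℂ)), μ.re < 0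

/-- `(C, A)` is detectable: no eigenvector of `A` for an eigenvalue with nonnegative real
part lies in the kernel of `C`. -/
def Detectable {n p : ℕ} (C : Matrix (Fin p) (Fin n) ℝ) (A : Matrix (Fin n) (Fin n) ℝ) :
    Prop :=
  ∀ (μ : ℂ) (v : Fin n → ℂ), v ≠ 0 →
    (A.map (algebraMap ℝ ℂ)).mulVec v = μ • v → 0 ≤ μ.re →
    (C.map (algebraMap ℝ ℂ)).mulVec v ≠ 0

/-- The positive semidefinite square root of a positive semidefinite real matrix, spelled out
as `Matrix.PosSemidef.sqrt` was defined in the older Mathlib (since removed). -/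
noncomputable def posSemidefSqrt {n : ℕ} {Q : Matrix (Fin n) (Fin n) ℝ} (hQ : Q.PosSemidef) :
    Matrix (Fin n) (Fin n) ℝ :=
  (hQ.1.eigenvectorUnitary : Matrix (Fin n) (Fin n) ℝ) *
    diagonal (fun i => Real.sqrt (hQ.1.eigenvalues i)) *
    (star hQ.1.eigenvectorUnitary : Matrix (Fin n) (Fin n) ℝ)

open scoped MatrixOrder ComplexOrder

namespace Matrix

variable {ι κ : Type*}

theorem transpose_map_algebraMap {𝕜 : Type*} [RCLike 𝕜] (M : Matrix ι κ ℝ) :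
    Mᵀ.map (algebraMap ℝ 𝕜) = (M.map (algebraMap ℝ 𝕜))ᴴ := by
  rw [← conjTranspose_eq_transpose_of_trivial, conjTranspose_map]
  intro x
  simp

variable [Fintype ι] [Fintype κ]

theorem exists_mulVec_eq_smul_of_mem_spectrum {K : Type*} [Field K] [DecidableEq ι]
    {M : Matrix ι ι K} {μ : K} (hμ : μ ∈ spectrum K M) :
    ∃ v : ι → K, v ≠ 0 ∧ M *ᵥ v = μ • v := by
  rw [← spectrum_toLin', ← Module.End.hasEigenvalue_iff_mem_spectrum] at hμ
  obtain ⟨v, hv⟩ := hμ.exists_hasEigenvector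
  exact ⟨v, hv.2, by simpa using hv.apply_eq_smul⟩

theorem kleinman_lyapunov_update {α : Type*} [CommRing α] {A P Q : Matrix ι ι α}
    {B : Matrix ι κ α} {R : Matrix κ κ α} {K K' : Matrix κ ι α}
    (hP : P.IsSymm) (hR : R.IsSymm) (hK' : R * K' = Bᵀ * P)
    (h : (A - B * K)ᵀ * P + P * (A - B * K) + Kᵀ * R * K + Q = 0) :
    (A - B * K')ᵀ * P + P * (A - B * K') + (Q + K'ᵀ * R * K' + (K - K')ᵀ * R * (K - K')) = 0 := by
  have hPB : P * B = K'ᵀ * R := by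
    simpa only [transpose_mul, transpose_transpose, hP.eq, hR.eq] using
      (congrArg transpose hK').symm
  calc _ = ((A - B * K)ᵀ * P + P * (A - B * K) + Kᵀ * R * K + Q)
          + ((K - K')ᵀ * (Bᵀ * P - R * K') + (P * B - K'ᵀ * R) * (K - K')) := by
        simp only [transpose_sub, transpose_mul, Matrix.sub_mul, Matrix.mul_sub, Matrix.mul_assoc]
        abel
    _ = 0 := by rw [h, hK', hPB]; simp

theorem PosSemidef.sqrt_transpose_mul_self [DecidableEq ι] {M : Matrix ι ι ℝ}
    (hM : M.PosSemidef) : (CFC.sqrt M)ᵀ * CFC.sqrt M = M := by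
  rw [← conjTranspose_eq_transpose_of_trivial, ← star_eq_conjTranspose,
    (CFC.sqrt_nonneg M).isSelfAdjoint.star_eq, CFC.sqrt_mul_sqrt_self M hM.nonneg]

section RCLike

variable {𝕜 : Type*} [RCLike 𝕜]

theorem PosSemidef.map_algebraMap {M : Matrix ι ι ℝ} (hM : M.PosSemidef) :
    (M.map (algebraMap ℝ 𝕜)).PosSemidef := by
  classical
  rw [← hM.sqrt_transpose_mul_self, Matrix.map_mul, transpose_map_algebraMap]
  exact posSemidef_conjTranspose_mul_self _

theorem PosDef.map_algebraMap {M : Matrix ι ι ℝ} (hM : M.PosDef) :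
    (M.map (algebraMap ℝ 𝕜)).PosDef := by
  classical
  exact hM.posSemidef.map_algebraMap.posDef_iff_isUnit.mpr
    (hM.isUnit.map (algebraMap ℝ 𝕜).mapMatrix)

theorem star_dotProduct_conjTranspose_mul_mulVec (M N : Matrix κ ι 𝕜)
    (v : ι → 𝕜) : star v ⬝ᵥ (Mᴴ * N) *ᵥ v = star (M *ᵥ v) ⬝ᵥ N *ᵥ v := by
  rw [← mulVec_mulVec, dotProduct_mulVec, ← star_mulVec]

theorem PosSemidef.mulVec_eq_zero_of_add {M N : Matrix ι ι 𝕜} (hM : M.PosSemidef)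
    (hN : N.PosSemidef) {v : ι → 𝕜} (h : (M + N) *ᵥ v = 0) : M *ᵥ v = 0 := by
  rw [← hM.dotProduct_mulVec_zero_iff]
  have hsum : star v ⬝ᵥ M *ᵥ v + star v ⬝ᵥ N *ᵥ v = 0 := by
    rw [← dotProduct_add, ← add_mulVec, h, dotProduct_zero]
  exact ((add_eq_zero_iff_of_nonneg (hM.dotProduct_mulVec_nonneg v)
    (hN.dotProduct_mulVec_nonneg v)).1 hsum).1

theorem PosDef.mulVec_eq_zero_of_conjTranspose_mul_mul {R : Matrix κ κ 𝕜} (hR : R.PosDef)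
    {K : Matrix κ ι 𝕜} {v : ι → 𝕜} (h : (Kᴴ * R * K) *ᵥ v = 0) : K *ᵥ v = 0 := by
  by_contra hKv
  have hquad : star v ⬝ᵥ (Kᴴ * (R * K)) *ᵥ v = 0 := by
    rw [← Matrix.mul_assoc, h, dotProduct_zero]
  rw [star_dotProduct_conjTranspose_mul_mulVec, ← mulVec_mulVec] at hquad
  exact (hR.dotProduct_mulVec_pos hKv).ne' hquad

theorem mulVec_eq_zero_of_lyapunov {A P W : Matrix ι ι 𝕜} (hP : P.PosSemidef)
    (hW : W.PosSemidef) (h : Aᴴ * P + P * A + W = 0) {μ : 𝕜} {v : ι → 𝕜}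
    (hv : A *ᵥ v = μ • v) (hμ : 0 ≤ RCLike.re μ) : W *ᵥ v = 0 := by
  have hquad : (2 * RCLike.re μ : 𝕜) * (star v ⬝ᵥ P *ᵥ v) + star v ⬝ᵥ W *ᵥ v = 0 := by
    have := congrArg (fun M => star v ⬝ᵥ M *ᵥ v) h
    simp only [add_mulVec, dotProduct_add, zero_mulVec, dotProduct_zero] at this
    rw [star_dotProduct_conjTranspose_mul_mulVec, ← mulVec_mulVec, hv, mulVec_smul, star_smul,
      smul_dotProduct, dotProduct_smul] at this
    rw [← RCLike.add_conj, add_mul]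
    simpa [smul_eq_mul, add_comm] using this
  have hPμ : 0 ≤ (2 * RCLike.re μ : 𝕜) * (star v ⬝ᵥ P *ᵥ v) :=
    mul_nonneg (mul_nonneg zero_le_two (RCLike.ofReal_nonneg.mpr hμ))
      (hP.dotProduct_mulVec_nonneg v)
  rw [← hW.dotProduct_mulVec_zero_iff]
  exact ((add_eq_zero_iff_of_nonneg hPμ (hW.dotProduct_mulVec_nonneg v)).1 hquad).2

theorem mulVec_eq_zero_of_kleinman_lyapunov {A P Q : Matrix ι ι 𝕜} {R : Matrix κ κ 𝕜}
    {K D : Matrix κ ι 𝕜} (hP : P.PosSemidef) (hQ : Q.PosSemidef) (hR : R.PosDef)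
    (h : Aᴴ * P + P * A + (Q + Kᴴ * R * K + Dᴴ * R * D) = 0) {μ : 𝕜} {v : ι → 𝕜}
    (hv : A *ᵥ v = μ • v) (hμ : 0 ≤ RCLike.re μ) : Q *ᵥ v = 0 ∧ K *ᵥ v = 0 := by
  have hK := hR.posSemidef.conjTranspose_mul_mul_same K
  have hD := hR.posSemidef.conjTranspose_mul_mul_same D
  have hW := mulVec_eq_zero_of_lyapunov hP ((hQ.add hK).add hD) h hv hμ
  have hQK := (hQ.add hK).mulVec_eq_zero_of_add hD hW
  have hKQ : (Kᴴ * R * K + Q) *ᵥ v = 0 := by rwa [add_comm]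
  exact ⟨hQ.mulVec_eq_zero_of_add hK hQK,
    hR.mulVec_eq_zero_of_conjTranspose_mul_mul (hK.mulVec_eq_zero_of_add hQ hKQ)⟩

end RCLike

end Matrix

theorem posSemidefSqrt_eq_sqrt {n : ℕ} {Q : Matrix (Fin n) (Fin n) ℝ} (hQ : Q.PosSemidef) :
    posSemidefSqrt hQ = CFC.sqrt Q := by
  rw [CFC.sqrt_eq_real_sqrt Q hQ.nonneg, cfcₙ_eq_cfc, hQ.1.cfc_eq]
  rfl

theorem kleinman_step_hurwitz_general {n m : ℕ}
    (A : Matrix (Fin n) (Fin n) ℝ) (B : Matrix (Fin n) (Fin m) ℝ)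
    (Q : Matrix (Fin n) (Fin n) ℝ) (R : Matrix (Fin m) (Fin m) ℝ)
    (hQ : Q.PosSemidef) (hR : R.PosDef)
    (hdet : Detectable (posSemidefSqrt hQ) A)
    (Ki Kip : Matrix (Fin m) (Fin n) ℝ) (Pi : Matrix (Fin n) (Fin n) ℝ)
    (hPipd : Pi.PosDef)
    (hALE : (A - B * Ki)ᵀ * Pi + Pi * (A - B * Ki) + Kiᵀ * R * Ki + Q = 0)
    (hKip : Kip = R⁻¹ * Bᵀ * Pi) :
    IsHurwitz (A - B * Kip) := by
  have hRK : R * Kip = Bᵀ * Pi := by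
    rw [hKip, ← Matrix.mul_assoc, ← Matrix.mul_assoc,
      mul_nonsing_inv _ ((isUnit_iff_isUnit_det R).mp hR.isUnit), Matrix.one_mul]
  have hLyap := congrArg (Matrix.map · (algebraMap ℝ ℂ)) <| kleinman_lyapunov_update
    (isHermitian_iff_isSymm.mp hPipd.isHermitian) (isHermitian_iff_isSymm.mp hR.isHermitian)
    hRK hALE
  simp only [Matrix.map_add _ (map_add _), Matrix.map_mul, transpose_map_algebraMap,
    Matrix.map_zero _ (map_zero _)] at hLyap
  intro μ hμ
  obtain ⟨v, hv0, hv⟩ := exists_mulVec_eq_smul_of_mem_spectrum hμ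
  by_contra! hre
  obtain ⟨hQv, hKv⟩ := mulVec_eq_zero_of_kleinman_lyapunov hPipd.map_algebraMap.posSemidef
    hQ.map_algebraMap hR.map_algebraMap hLyap hv hre
  refine hdet μ v hv0 ?_ hre ?_
  · rwa [Matrix.map_sub _ (map_sub _), Matrix.map_mul, sub_mulVec, ← mulVec_mulVec, hKv,
      mulVec_zero, sub_zero] at hv
  · rw [← conjTranspose_mul_self_mulVec_eq_zero, ← transpose_map_algebraMap, ← Matrix.map_mul,
      posSemidefSqrt_eq_sqrt, hQ.sqrt_transpose_mul_self, hQv]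

/-- One step of Kleinman's algorithm preserves stability: if `A − B Kᵢ` is Hurwitz,
`Pᵢ` is the symmetric positive definite solution of the closed-loop Lyapunov equation, and
`Kᵢ₊₁ = R⁻¹ Bᵀ Pᵢ`, then `A − B Kᵢ₊₁` is Hurwitz. -/
theorem kleinman_step_hurwitz {n m : ℕ}
    (A : Matrix (Fin n) (Fin n) ℝ) (B : Matrix (Fin n) (Fin m) ℝ)
    (Q : Matrix (Fin n) (Fin n) ℝ) (R : Matrix (Fin m) (Fin m) ℝ)
    (hQ : Q.PosSemidef) (hR : R.PosDef)
    (hdet : Detectable (posSemidefSqrt hQ) A)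
    (hstab : ∃ K : Matrix (Fin m) (Fin n) ℝ, IsHurwitz (A - B * K))
    (Ki Kip : Matrix (Fin m) (Fin n) ℝ) (Pi : Matrix (Fin n) (Fin n) ℝ)
    (hKi : IsHurwitz (A - B * Ki))
    (hPi : Pi.IsSymm) (hPipd : Pi.PosDef)
    (hALE : (A - B * Ki)ᵀ * Pi + Pi * (A - B * Ki) + Kiᵀ * R * Ki + Q = 0)
    (hKip : Kip = R⁻¹ * Bᵀ * Pi) :
    IsHurwitz (A - B * Kip) :=
  kleinman_step_hurwitz_general A B Q R hQ hR hdet Ki Kip Pi hPipd hALE hKip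
end

section
/- If P* solves the CARE A^T P + P A − P B R^{-1} B^T P + Q = 0 with P* symmetric positive definite and (Q^{1/2}, A) detectable, then A − B R^{-1} B^T P* is Hurwitz. -/
/-!
With `K = R⁻¹ Bᵀ P*`, the CARE is the Lyapunov equation
`(A - B K)ᵀ P* + P* (A - B K) + (Q + Kᵀ R K) = 0` for the closed loop. Pairing it with an
eigenvector `v` of `A - B K` for `μ` gives `2 Re μ · v* P* v + v* Q v + (K v)* R (K v) = 0`, a sum
of nonnegative terms when `Re μ ≥ 0`. Hence `Q^{1/2} v = 0` and `K v = 0`, so `v` is an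
eigenvector of `A` for `μ` annihilated by `Q^{1/2}`, which detectability forbids.
-/

open Matrix

/-- The square root of a positive semidefinite matrix, as defined in Mathlib of December 2024
(`Matrix.PosSemidef.sqrt`, since removed). -/
noncomputable def Matrix.PosSemidef.sqrt {n : Type*} [Fintype n] [DecidableEq n]
    {A : Matrix n n ℝ} (hA : A.PosSemidef) : Matrix n n ℝ :=
  hA.1.eigenvectorUnitary.1 * diagonal ((↑) ∘ (√·) ∘ hA.1.eigenvalues) *
    (star hA.1.eigenvectorUnitary : Matrix n n ℝ)

open scoped ComplexOrder

theorem Matrix.exists_mulVec_eq_smul_of_mem_spectrum_s11 {K n : Type*} [Field K] [Fintype n]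
    [DecidableEq n] {M : Matrix n n K} {μ : K} (h : μ ∈ spectrum K M) :
    ∃ v ≠ 0, M *ᵥ v = μ • v := by
  rw [← spectrum_toLin', ← Module.End.hasEigenvalue_iff_mem_spectrum] at h
  obtain ⟨v, hv⟩ := h.exists_hasEigenvector
  exact ⟨v, hv.2, hv.apply_eq_smul⟩

theorem Matrix.conjTranspose_map_algebraMap {m n : Type*} (M : Matrix m n ℝ) :
    (M.map (algebraMap ℝ ℂ))ᴴ = Mᵀ.map (algebraMap ℝ ℂ) := by
  ext i j
  simp

namespace Matrix.PosSemidef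

variable {n : Type*} [Fintype n] [DecidableEq n] {A : Matrix n n ℝ} (hA : A.PosSemidef)
include hA

theorem sqrt_mul_self : hA.sqrt * hA.sqrt = A := by
  set U : Matrix n n ℝ := hA.1.eigenvectorUnitary.1
  have hU : (star hA.1.eigenvectorUnitary : Matrix n n ℝ) * U = 1 := by simp [U]
  conv_rhs => rw [hA.1.spectral_theorem, Unitary.conjStarAlgAut_apply]
  simp only [sqrt, Matrix.mul_assoc]
  rw [← Matrix.mul_assoc _ U, hU, Matrix.one_mul, ← Matrix.mul_assoc (diagonal _),
    diagonal_mul_diagonal]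
  congr 3
  funext i
  simp [Real.mul_self_sqrt (hA.eigenvalues_nonneg i)]

theorem transpose_sqrt : hA.sqrtᵀ = hA.sqrt := by
  rw [← conjTranspose_eq_transpose_of_trivial]
  exact isHermitian_mul_mul_conjTranspose _ (isHermitian_diagonal _)

theorem map_algebraMap_eq_conjTranspose_mul_self :
    A.map (algebraMap ℝ ℂ) = (hA.sqrt.map (algebraMap ℝ ℂ))ᴴ * hA.sqrt.map (algebraMap ℝ ℂ) := by
  rw [conjTranspose_map_algebraMap, hA.transpose_sqrt, ← Matrix.map_mul, hA.sqrt_mul_self]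

theorem map_algebraMap_s11 : (A.map (algebraMap ℝ ℂ)).PosSemidef := by
  rw [hA.map_algebraMap_eq_conjTranspose_mul_self]
  exact posSemidef_conjTranspose_mul_self _

theorem sqrt_map_mulVec_eq_zero {v : n → ℂ} (hv : star v ⬝ᵥ A.map (algebraMap ℝ ℂ) *ᵥ v = 0) :
    hA.sqrt.map (algebraMap ℝ ℂ) *ᵥ v = 0 := by
  rwa [hA.map_algebraMap_eq_conjTranspose_mul_self, ← mulVec_mulVec, dotProduct_mulVec,
    ← star_mulVec, dotProduct_star_self_eq_zero] at hv

end Matrix.PosSemidef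

theorem Matrix.PosDef.map_algebraMap_s11 {n : Type*} [Fintype n] [DecidableEq n]
    {A : Matrix n n ℝ} (hA : A.PosDef) : (A.map (algebraMap ℝ ℂ)).PosDef :=
  hA.posSemidef.map_algebraMap_s11.posDef_iff_isUnit.mpr (hA.isUnit.map (algebraMap ℝ ℂ).mapMatrix)

theorem Matrix.dotProduct_mulVec_eq_zero_of_lyapunov {n : Type*} [Fintype n]
    {M P N : Matrix n n ℂ} (hP : P.PosSemidef) (hN : N.PosSemidef)
    (hlyap : Mᴴ * P + P * M + N = 0) {μ : ℂ} {v : n → ℂ} (hv : M *ᵥ v = μ • v)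
    (hμ : 0 ≤ μ.re) :
    star v ⬝ᵥ N *ᵥ v = 0 := by
  have hquad : (star μ + μ) * (star v ⬝ᵥ P *ᵥ v) + star v ⬝ᵥ N *ᵥ v = 0 := by
    simpa [add_mulVec, ← mulVec_mulVec, dotProduct_mulVec _ Mᴴ, ← star_mulVec, hv, add_mul,
      mulVec_smul] using congrArg (fun X => star v ⬝ᵥ X *ᵥ v) hlyap
  have hdamp : 0 ≤ (star μ + μ) * (star v ⬝ᵥ P *ᵥ v) := by
    refine mul_nonneg ?_ (hP.dotProduct_mulVec_nonneg v)
    rw [add_comm, Complex.star_def, Complex.add_conj, Complex.zero_le_real]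
    positivity
  have hN0 : star v ⬝ᵥ N *ᵥ v ≤ 0 := by
    rw [eq_neg_of_add_eq_zero_right hquad]
    exact neg_nonpos.mpr hdamp
  exact le_antisymm hN0 (hN.dotProduct_mulVec_nonneg v)

theorem Matrix.dotProduct_mulVec_map_eq_zero_of_lyapunov {n : Type*} [Fintype n] [DecidableEq n]
    {M P N : Matrix n n ℝ} (hP : P.PosSemidef) (hN : N.PosSemidef)
    (hlyap : Mᵀ * P + P * M + N = 0) {μ : ℂ} {v : n → ℂ}
    (hv : M.map (algebraMap ℝ ℂ) *ᵥ v = μ • v) (hμ : 0 ≤ μ.re) :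
    star v ⬝ᵥ N.map (algebraMap ℝ ℂ) *ᵥ v = 0 := by
  refine dotProduct_mulVec_eq_zero_of_lyapunov hP.map_algebraMap_s11 hN.map_algebraMap_s11 ?_ hv hμ
  have := congrArg (algebraMap ℝ ℂ).mapMatrix hlyap
  simpa only [map_add, map_mul, map_zero, RingHom.mapMatrix_apply,
    ← conjTranspose_map_algebraMap] using this

theorem Matrix.PosDef.mulVec_eq_zero_of_dotProduct_conjTranspose_mul_mul_eq_zero
    {m n R : Type*} [Fintype m] [Fintype n] [CommRing R] [PartialOrder R] [StarRing R]
    {A : Matrix m m R} (hA : A.PosDef) {B : Matrix m n R} {v : n → R}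
    (h : star v ⬝ᵥ (Bᴴ * A * B) *ᵥ v = 0) : B *ᵥ v = 0 := by
  by_contra hBv
  refine (hA.dotProduct_mulVec_pos hBv).ne' ?_
  rwa [← mulVec_mulVec, ← mulVec_mulVec, dotProduct_mulVec, ← star_mulVec] at h

theorem care_closedLoop_lyapunov {n m : Type*} [Fintype n] [Fintype m] [DecidableEq m]
    {A P Q : Matrix n n ℝ} {B : Matrix n m ℝ} {R : Matrix m m ℝ} (hP : P.IsSymm)
    (hR : R.IsSymm) (hRdet : IsUnit R.det)
    (hCARE : Aᵀ * P + P * A - P * B * R⁻¹ * Bᵀ * P + Q = 0) :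
    (A - B * (R⁻¹ * Bᵀ * P))ᵀ * P + P * (A - B * (R⁻¹ * Bᵀ * P)) +
      (Q + (R⁻¹ * Bᵀ * P)ᵀ * R * (R⁻¹ * Bᵀ * P)) = 0 := by
  have hRinvT : R⁻¹ᵀ = R⁻¹ := by rw [transpose_nonsing_inv, hR.eq]
  rw [← hCARE]
  simp only [transpose_sub, transpose_mul, transpose_transpose, hRinvT, hP.eq, Matrix.sub_mul,
    Matrix.mul_sub, Matrix.mul_assoc]
  rw [← Matrix.mul_assoc R⁻¹ R, nonsing_inv_mul R hRdet, Matrix.one_mul]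
  abel

theorem care_solution_stabilizing_general {n m : ℕ}
    (A : Matrix (Fin n) (Fin n) ℝ) (B : Matrix (Fin n) (Fin m) ℝ)
    (Q : Matrix (Fin n) (Fin n) ℝ) (R : Matrix (Fin m) (Fin m) ℝ)
    (hQ : Q.PosSemidef) (hR : R.PosDef)
    (hdet : Detectable hQ.sqrt A)
    (Pstar : Matrix (Fin n) (Fin n) ℝ)
    (hPstar_pd : Pstar.PosDef)
    (hCARE : Aᵀ * Pstar + Pstar * A - Pstar * B * R⁻¹ * Bᵀ * Pstar + Q = 0) :
    IsHurwitz (A - B * (R⁻¹ * Bᵀ * Pstar)) := by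
  intro μ hμ
  by_contra! hre
  obtain ⟨v, hv0, hv⟩ := exists_mulVec_eq_smul_of_mem_spectrum_s11 hμ
  set K := R⁻¹ * Bᵀ * Pstar
  have hKRK : (Kᵀ * R * K).PosSemidef := hR.posSemidef.conjTranspose_mul_mul_same K
  have hzero := dotProduct_mulVec_map_eq_zero_of_lyapunov hPstar_pd.posSemidef (hQ.add hKRK)
    (care_closedLoop_lyapunov (isHermitian_iff_isSymm.mp hPstar_pd.isHermitian)
      (isHermitian_iff_isSymm.mp hR.isHermitian) ((isUnit_iff_isUnit_det R).mp hR.isUnit) hCARE)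
    hv hre
  rw [Matrix.map_add _ (map_add _), add_mulVec, dotProduct_add] at hzero
  obtain ⟨hQv, hKRKv⟩ := (add_eq_zero_iff_of_nonneg (hQ.map_algebraMap_s11.dotProduct_mulVec_nonneg v)
    (hKRK.map_algebraMap_s11.dotProduct_mulVec_nonneg v)).mp hzero
  rw [Matrix.map_mul, Matrix.map_mul, ← conjTranspose_map_algebraMap] at hKRKv
  have hKv := hR.map_algebraMap_s11.mulVec_eq_zero_of_dotProduct_conjTranspose_mul_mul_eq_zero hKRKv
  have hAv : A.map (algebraMap ℝ ℂ) *ᵥ v = μ • v := by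
    rwa [Matrix.map_sub _ (map_sub _), Matrix.map_mul, sub_mulVec, ← mulVec_mulVec, hKv,
      mulVec_zero, sub_zero] at hv
  exact hdet μ v hv0 hAv hre (hQ.sqrt_map_mulVec_eq_zero hQv)

/-- If `P*` is a symmetric positive definite solution of the CARE and `(Q^{1/2}, A)` is
detectable, then the closed-loop matrix `A − B R⁻¹ Bᵀ P*` is Hurwitz. -/
theorem care_solution_stabilizing {n m : ℕ}
    (A : Matrix (Fin n) (Fin n) ℝ) (B : Matrix (Fin n) (Fin m) ℝ)
    (Q : Matrix (Fin n) (Fin n) ℝ) (R : Matrix (Fin m) (Fin m) ℝ)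
    (hQ : Q.PosSemidef) (hR : R.PosDef)
    (hdet : Detectable hQ.sqrt A)
    (Pstar : Matrix (Fin n) (Fin n) ℝ)
    (hPstar_symm : Pstar.IsSymm) (hPstar_pd : Pstar.PosDef)
    (hCARE : Aᵀ * Pstar + Pstar * A - Pstar * B * R⁻¹ * Bᵀ * Pstar + Q = 0) :
    IsHurwitz (A - B * (R⁻¹ * Bᵀ * Pstar)) :=
  care_solution_stabilizing_general A B Q R hQ hR hdet Pstar hPstar_pd hCARE
end

section
/- Suppose the data matrix I_{B(x,x)} ∈ R^{l × n(n+1)/2}, whose k-th row is ∫_{t_{k-1}}^{t_k} B(x(τ),x(τ))^T dτ, has full column rank, and K_i is such that A_i = A − B K_i is Hurwitz. Then the EIRL regression matrix Θ_i = δ_{xx} − 2[I_{B(x,x)} W_i^T + I_{B(x,gu)} + I_{B(x,w)}] has full column rank n(n+1)/2. -/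
open Matrix
open scoped Kronecker

abbrev SymIdx (n : ℕ) := {p : Fin n × Fin n // p.1 ≤ p.2}

noncomputable def vfun {n : ℕ} (P : Matrix (Fin n) (Fin n) ℝ) : SymIdx n → ℝ :=
  fun p => if p.1.1 = p.1.2 then P p.1.1 p.1.2 else 2 * P p.1.1 p.1.2

noncomputable def Bfun {n : ℕ} (x y : Fin n → ℝ) : SymIdx n → ℝ :=
  fun p => if p.1.1 = p.1.2 then x p.1.1 * y p.1.1
           else (x p.1.1 * y p.1.2 + x p.1.2 * y p.1.1) / 2

noncomputable def kron {n : ℕ} (x y : Fin n → ℝ) : Fin n × Fin n → ℝ :=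
  fun p => x p.1 * y p.2

/-!
Pair the rows of `Θ` with `v(P)` for a symmetric `P`. By the fundamental theorem of calculus
`δ_{xx} = ∫ 2 B(x, ẋ)`; substituting `ẋ = f(x) + g(x) u` and `Wᵢ B(x, x) = B(x, B Kᵢ x)` collapses
each row of `Θ` to `∫ 2 B(x, Aᵢ x)`, whose pairing with `v(P)` is `∫ xᵀ (Aᵢᵀ P + P Aᵢ) x`.
Hence `Θ v(P) = I_{B(x,x)} v(Aᵢᵀ P + P Aᵢ)`, and if this vanishes the rank of `I_{B(x,x)}` forces
`Aᵢᵀ P + P Aᵢ = 0`. For Hurwitz `Aᵢ` the spectra of `Aᵢᵀ` and `-Aᵢ` are disjoint, so this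
Sylvester equation has only the solution `P = 0`.
-/

open Finset in
theorem Finset.sum_prod_eq_sum_le_add_swap {ι M : Type*} [LinearOrder ι] [Fintype ι]
    [AddCommMonoid M] (f : ι × ι → M) :
    ∑ p, f p = ∑ p : {p : ι × ι // p.1 ≤ p.2}, (f p + if p.1.1 = p.1.2 then 0 else f p.1.swap) := by
  have hswap : ∑ p : ι × ι, (if p.2 < p.1 then f p else 0)
      = ∑ p : ι × ι, if p.1 < p.2 then f p.swap else 0 :=
    Fintype.sum_equiv (Equiv.prodComm ι ι) _ _ fun _ => rfl
  calc ∑ p, f p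
      = ∑ p : ι × ι, ((if p.1 ≤ p.2 then f p else 0) + if p.2 < p.1 then f p else 0) := by
        refine sum_congr rfl fun p _ => ?_
        by_cases h : p.1 ≤ p.2 <;> simp [h, not_lt.mpr, lt_of_not_ge]
    _ = ∑ p : ι × ι, if p.1 ≤ p.2 then f p + (if p.1 = p.2 then 0 else f p.swap) else 0 := by
        rw [sum_add_distrib, hswap, ← sum_add_distrib]
        refine sum_congr rfl fun p _ => ?_
        rcases lt_trichotomy p.1 p.2 with h | h | h
        · simp [h, h.le, h.ne]
        · simp [h]
        · simp [not_le.mpr h, not_lt.mpr h.le]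
    _ = _ := by
        rw [← sum_filter]
        exact sum_subtype _ (by simp) _

theorem Matrix.IsSymm.dotProduct_mulVec_comm {ι : Type*} [Fintype ι] {P : Matrix ι ι ℝ}
    (hP : P.IsSymm) (v w : ι → ℝ) : v ⬝ᵥ P *ᵥ w = w ⬝ᵥ P *ᵥ v := by
  rw [dotProduct_mulVec, ← hP.eq, vecMul_transpose, dotProduct_comm, hP.eq]

theorem Matrix.IsSymm.transpose_mul_add_mul {ι : Type*} [Fintype ι] {P : Matrix ι ι ℝ}
    (hP : P.IsSymm) (A : Matrix ι ι ℝ) : (Aᵀ * P + P * A).IsSymm := by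
  rw [Matrix.IsSymm, transpose_add, transpose_mul, transpose_mul, transpose_transpose, hP.eq,
    add_comm]

theorem Bfun_dotProduct_vfun {n : ℕ} {P : Matrix (Fin n) (Fin n) ℝ} (hP : P.IsSymm)
    (y z : Fin n → ℝ) : Bfun y z ⬝ᵥ vfun P = y ⬝ᵥ P *ᵥ z := by
  simp only [dotProduct, mulVec, Finset.mul_sum]
  rw [← Fintype.sum_prod_type', Finset.sum_prod_eq_sum_le_add_swap]
  refine Finset.sum_congr rfl fun ⟨⟨i, j⟩, hij⟩ _ => ?_
  by_cases h : i = j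
  · subst h; simp [Bfun, vfun]; ring
  · simp [Bfun, vfun, h, hP.apply i j]; ring

theorem two_smul_Bfun_mulVec_dotProduct_vfun {n : ℕ} {P : Matrix (Fin n) (Fin n) ℝ}
    (hP : P.IsSymm) (A : Matrix (Fin n) (Fin n) ℝ) (y : Fin n → ℝ) :
    (2 • Bfun y (A *ᵥ y)) ⬝ᵥ vfun P = Bfun y y ⬝ᵥ vfun (Aᵀ * P + P * A) := by
  rw [smul_dotProduct, Bfun_dotProduct_vfun hP, Bfun_dotProduct_vfun (hP.transpose_mul_add_mul A),
    add_mulVec, dotProduct_add, ← mulVec_mulVec, ← mulVec_mulVec, dotProduct_mulVec y Aᵀ,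
    vecMul_transpose, hP.dotProduct_mulVec_comm (A *ᵥ y), two_smul]

theorem exists_isSymm_vfun_eq {n : ℕ} (c : SymIdx n → ℝ) :
    ∃ P : Matrix (Fin n) (Fin n) ℝ, P.IsSymm ∧ vfun P = c := by
  refine ⟨Matrix.of fun i j => (if i = j then 1 else 1 / 2) * c ⟨(min i j, max i j), min_le_max⟩,
    ?_, ?_⟩
  · ext i j
    simp only [Matrix.transpose_apply, Matrix.of_apply, min_comm j i, max_comm j i, eq_comm]
  · ext ⟨⟨i, j⟩, hij⟩
    by_cases h : i = j
    · subst h; simp [vfun]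
    · simp [vfun, h, min_eq_left hij, max_eq_right hij]

theorem Matrix.IsSymm.eq_zero_of_vfun_eq_zero {n : ℕ} {P : Matrix (Fin n) (Fin n) ℝ}
    (hP : P.IsSymm) (h : vfun P = 0) : P = 0 := by
  have hle : ∀ i j, i ≤ j → P i j = 0 := fun i j hij => by
    have := congrFun h ⟨(i, j), hij⟩
    by_cases hd : i = j <;> simp_all [vfun]
  ext i j
  rcases le_total i j with hij | hji
  · exact hle i j hij
  · rw [← hP.apply]; exact hle j i hji

open Polynomial in
theorem Matrix.aeval_mul_eq_mul_aeval {R ι : Type*} [CommSemiring R] [Fintype ι] [DecidableEq ι]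
    {M N X : Matrix ι ι R} (h : M * X = X * N) (p : R[X]) :
    aeval M p * X = X * aeval N p := by
  induction p using Polynomial.induction_on' with
  | add p q hp hq => rw [map_add, map_add, add_mul, mul_add, hp, hq]
  | monomial k a =>
    have hpow : M ^ k * X = X * N ^ k := (SemiconjBy.pow_right h.symm k).symm
    rw [aeval_monomial, aeval_monomial, mul_assoc, hpow, ← mul_assoc, Algebra.commutes,
      mul_assoc]

open Polynomial in
theorem Matrix.eq_zero_of_mul_eq_mul_of_disjoint_spectrum {K ι : Type*} [Field K] [IsAlgClosed K]
    [Fintype ι] [DecidableEq ι] {M N X : Matrix ι ι K}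
    (hMN : Disjoint (spectrum K M) (spectrum K N)) (h : M * X = X * N) : X = 0 := by
  nontriviality Matrix ι ι K
  -- `aeval M N.charpoly` is invertible by the spectral mapping theorem, yet it annihilates `X`.
  have hunit : IsUnit (aeval M N.charpoly) := by
    rw [← spectrum.zero_notMem_iff K, spectrum.map_polynomial_aeval_of_nonempty _ _
      (spectrum.nonempty_of_isAlgClosed_of_finiteDimensional K M)]
    rintro ⟨μ, hμM, hμ⟩
    exact hMN.notMem_of_mem_left hμM (Matrix.mem_spectrum_iff_isRoot_charpoly.mpr hμ)
  apply hunit.mul_left_cancel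
  rw [Matrix.aeval_mul_eq_mul_aeval h, Matrix.aeval_self_charpoly, mul_zero, mul_zero]

theorem Matrix.spectrum_transpose {K ι : Type*} [Field K] [Fintype ι] [DecidableEq ι]
    (M : Matrix ι ι K) : spectrum K Mᵀ = spectrum K M := by
  ext μ
  rw [Matrix.mem_spectrum_iff_isRoot_charpoly, Matrix.mem_spectrum_iff_isRoot_charpoly,
    Matrix.charpoly_transpose]

theorem IsHurwitz.eq_zero_of_lyapunov {n : ℕ} {A P : Matrix (Fin n) (Fin n) ℝ} (hA : IsHurwitz A)
    (hP : Aᵀ * P + P * A = 0) : P = 0 := by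
  set φ := (algebraMap ℝ ℂ).mapMatrix (m := Fin n)
  have hdisj : Disjoint (spectrum ℂ (φ A)ᵀ) (spectrum ℂ (-φ A)) := by
    rw [Matrix.spectrum_transpose, ← spectrum.neg_eq, Set.disjoint_left]
    intro μ hμ hμ'
    have hμ_re := hA μ hμ
    have hnegμ_re := hA (-μ) (Set.mem_neg.mp hμ')
    rw [Complex.neg_re] at hnegμ_re
    linarith
  have hφP : (φ A)ᵀ * φ P = φ P * -φ A := by
    change φ Aᵀ * φ P = φ P * -φ A
    rw [mul_neg, eq_neg_iff_add_eq_zero, ← map_mul, ← map_mul, ← map_add, hP, map_zero]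
  have hφP0 := Matrix.eq_zero_of_mul_eq_mul_of_disjoint_spectrum hdisj hφP
  exact Matrix.map_injective (algebraMap ℝ ℂ).injective (by simpa [φ] using hφP0)

@[fun_prop]
theorem Continuous.Bfun {α : Type*} [TopologicalSpace α] {n : ℕ} {x y : α → Fin n → ℝ}
    (hx : Continuous x) (hy : Continuous y) : Continuous fun a => Bfun (x a) (y a) :=
  continuous_pi fun p => by unfold _root_.Bfun; split_ifs <;> fun_prop

theorem Bfun_add_sub {n : ℕ} (a b : Fin n → ℝ) : Bfun (a + b) (a - b) = Bfun a a - Bfun b b := by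
  ext p
  simp only [Bfun, Pi.add_apply, Pi.sub_apply]
  split_ifs <;> ring

theorem hasDerivAt_Bfun_self {n : ℕ} {x : ℝ → Fin n → ℝ} {v : Fin n → ℝ} {τ : ℝ}
    (hx : HasDerivAt x v τ) : HasDerivAt (fun s => Bfun (x s) (x s)) (2 • Bfun (x τ) v) τ := by
  rw [hasDerivAt_pi] at hx ⊢
  intro p
  simp only [Bfun, Pi.smul_apply]
  split_ifs
  · exact ((hx _).fun_mul (hx _)).congr_deriv (by ring)
  · exact ((((hx _).fun_mul (hx _)).fun_add ((hx _).fun_mul (hx _))).div_const 2).congr_deriv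
      (by ring)

theorem Bfun_add_sub_eq_integral {n : ℕ} {x v : ℝ → Fin n → ℝ}
    (hx : ∀ τ, HasDerivAt x (v τ) τ) (hv : Continuous v) (a b : ℝ) :
    Bfun (x b + x a) (x b - x a) = ∫ τ in a..b, 2 • Bfun (x τ) (v τ) := by
  have hxc : Continuous x := continuous_iff_continuousAt.mpr fun τ => (hx τ).continuousAt
  rw [Bfun_add_sub, intervalIntegral.integral_eq_sub_of_hasDerivAt
    (fun τ _ => hasDerivAt_Bfun_self (hx τ)) ((by fun_prop : Continuous _).intervalIntegrable _ _)]

theorem one_kronecker_mulVec_kron {n : ℕ} (N : Matrix (Fin n) (Fin n) ℝ) (y z : Fin n → ℝ) :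
    ((1 : Matrix (Fin n) (Fin n) ℝ) ⊗ₖ N) *ᵥ kron y z = kron y (N *ᵥ z) := by
  ext ⟨i, j⟩
  simp [mulVec, dotProduct, kron, Fintype.sum_prod_type, Matrix.one_apply, Finset.mul_sum,
    mul_left_comm]

theorem Matrix.mulVec_intervalIntegral {m n : Type*} [Fintype m] [Fintype n] (M : Matrix m n ℝ)
    {F : ℝ → n → ℝ} {a b : ℝ} (hF : IntervalIntegrable F MeasureTheory.volume a b) :
    M *ᵥ ∫ τ in a..b, F τ = ∫ τ in a..b, M *ᵥ F τ :=
  ((LinearMap.toContinuousLinearMap M.mulVecLin).intervalIntegral_comp_comm hF).symm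

theorem intervalIntegral_dotProduct {n : Type*} [Fintype n] {F : ℝ → n → ℝ} {a b : ℝ}
    (hF : IntervalIntegrable F MeasureTheory.volume a b) (c : n → ℝ) :
    (∫ τ in a..b, F τ) ⬝ᵥ c = ∫ τ in a..b, F τ ⬝ᵥ c :=
  ((LinearMap.toContinuousLinearMap ((dotProductBilin ℝ ℝ).flip c)).intervalIntegral_comp_comm
    hF).symm

theorem integral_two_smul_Bfun_mulVec_dotProduct_vfun {n : ℕ} {x : ℝ → Fin n → ℝ}
    (hx : Continuous x) (A : Matrix (Fin n) (Fin n) ℝ) {P : Matrix (Fin n) (Fin n) ℝ}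
    (hP : P.IsSymm) (a b : ℝ) :
    (∫ τ in a..b, 2 • Bfun (x τ) (A *ᵥ x τ)) ⬝ᵥ vfun P
      = (∫ τ in a..b, Bfun (x τ) (x τ)) ⬝ᵥ vfun (Aᵀ * P + P * A) := by
  rw [intervalIntegral_dotProduct ((by fun_prop : Continuous _).intervalIntegrable _ _),
    intervalIntegral_dotProduct ((by fun_prop : Continuous _).intervalIntegrable _ _)]
  simp_rw [two_smul_Bfun_mulVec_dotProduct_vfun hP]

theorem eirl_row_eq_integral {n : ℕ} {A N : Matrix (Fin n) (Fin n) ℝ}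
    {M : Matrix (SymIdx n) (SymIdx n) ℝ} (hM : ∀ z, M *ᵥ Bfun z z = Bfun z (N *ᵥ z))
    {f : (Fin n → ℝ) → (Fin n → ℝ)} {d x : ℝ → Fin n → ℝ}
    (hf : Continuous f) (hd : Continuous d) (hx : ∀ τ, HasDerivAt x (f (x τ) + d τ) τ)
    (a b : ℝ) :
    Bfun (x b + x a) (x b - x a) -
        (2 : ℝ) • (M *ᵥ (∫ τ in a..b, Bfun (x τ) (x τ)) + (∫ τ in a..b, Bfun (x τ) (d τ)) +
          ∫ τ in a..b, Bfun (x τ) (f (x τ) - A *ᵥ x τ))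
      = ∫ τ in a..b, 2 • Bfun (x τ) ((A - N) *ᵥ x τ) := by
  have hxc : Continuous x := continuous_iff_continuousAt.mpr fun τ => (hx τ).continuousAt
  have hint {F : ℝ → SymIdx n → ℝ} (hF : Continuous F) :
      IntervalIntegrable F MeasureTheory.volume a b :=
    hF.intervalIntegrable a b
  rw [Bfun_add_sub_eq_integral hx (by fun_prop), M.mulVec_intervalIntegral (hint (by fun_prop)),
    ← intervalIntegral.integral_add (hint (by fun_prop)) (hint (by fun_prop)),
    ← intervalIntegral.integral_add (hint (by fun_prop)) (hint (by fun_prop)),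
    ← intervalIntegral.integral_smul,
    ← intervalIntegral.integral_sub (hint (by fun_prop)) (hint (by fun_prop))]
  refine intervalIntegral.integral_congr fun τ _ => ?_
  ext p
  simp only [hM, sub_mulVec, Bfun, Pi.add_apply, Pi.sub_apply, Pi.smul_apply, smul_eq_mul]
  split_ifs <;> ring

theorem eirl_theta_full_rank_general {n m l : ℕ}
    (A : Matrix (Fin n) (Fin n) ℝ) (B : Matrix (Fin n) (Fin m) ℝ)
    (Ki : Matrix (Fin m) (Fin n) ℝ)
    (hKi : IsHurwitz (A - B * Ki))
    (W : Matrix (SymIdx n) (Fin n × Fin n) ℝ)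
    (hW : ∀ x y : Fin n → ℝ, Bfun x y = W.mulVec (kron x y))
    (Wr : Matrix (Fin n × Fin n) (SymIdx n) ℝ)
    (hWr : ∀ x : Fin n → ℝ, kron x x = Wr.mulVec (Bfun x x))
    (f : (Fin n → ℝ) → (Fin n → ℝ)) (g : (Fin n → ℝ) → Matrix (Fin n) (Fin m) ℝ)
    (u : ℝ → (Fin m → ℝ)) (x : ℝ → (Fin n → ℝ))
    (hf : Continuous f) (hg : Continuous g) (hu : Continuous u)
    (hx : ∀ τ : ℝ, HasDerivAt x (f (x τ) + (g (x τ)).mulVec (u τ)) τ)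
    (t : Fin (l + 1) → ℝ)
    (IB Θ : Matrix (Fin l) (SymIdx n) ℝ)
    (hIB : ∀ k : Fin l,
      IB k = ∫ τ in t k.castSucc..t k.succ, Bfun (x τ) (x τ))
    (hΘ : ∀ k : Fin l,
      Θ k = Bfun (x (t k.succ) + x (t k.castSucc)) (x (t k.succ) - x (t k.castSucc)) -
        (2 : ℝ) • ((W * ((1 : Matrix (Fin n) (Fin n) ℝ) ⊗ₖ (B * Ki)) * Wr).mulVec (IB k) +
          (∫ τ in t k.castSucc..t k.succ, Bfun (x τ) ((g (x τ)).mulVec (u τ))) +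
          (∫ τ in t k.castSucc..t k.succ, Bfun (x τ) (f (x τ) - A.mulVec (x τ)))))
    (hIBrank : ∀ c : SymIdx n → ℝ, IB.mulVec c = 0 → c = 0) :
    ∀ c : SymIdx n → ℝ, Θ.mulVec c = 0 → c = 0 := by
  intro c hc
  obtain ⟨P, hP, rfl⟩ := exists_isSymm_vfun_eq c
  have hxc : Continuous x := continuous_iff_continuousAt.mpr fun τ => (hx τ).continuousAt
  have hWKi (z : Fin n → ℝ) : (W * ((1 : Matrix (Fin n) (Fin n) ℝ) ⊗ₖ (B * Ki)) * Wr) *ᵥ Bfun z z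
      = Bfun z ((B * Ki) *ᵥ z) := by
    rw [← mulVec_mulVec, ← mulVec_mulVec, ← hWr, one_kronecker_mulVec_kron, ← hW]
  have hrows : Θ *ᵥ vfun P = IB *ᵥ vfun ((A - B * Ki)ᵀ * P + P * (A - B * Ki)) := by
    ext k
    change Θ k ⬝ᵥ _ = IB k ⬝ᵥ _
    rw [hΘ k, hIB k, eirl_row_eq_integral hWKi hf (by fun_prop) hx,
      integral_two_smul_Bfun_mulVec_dotProduct_vfun hxc _ hP]
  have hlyap := (hP.transpose_mul_add_mul _).eq_zero_of_vfun_eq_zero (hIBrank _ (hrows ▸ hc))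
  rw [hKi.eq_zero_of_lyapunov hlyap]
  ext
  simp [vfun]

/-- If the data matrix `I_{B(x,x)}` (rows `∫ B(x,x)ᵀ dτ` over consecutive sample
intervals) has full column rank and `Aᵢ = A − B Kᵢ` is Hurwitz, then the EIRL regression
matrix `Θᵢ = δ_{xx} − 2 [I_{B(x,x)} Wᵢᵀ + I_{B(x,gu)} + I_{B(x,w)}]` has full column rank
(here full column rank is expressed as injectivity of `mulVec`). -/
theorem eirl_theta_full_rank {n m l : ℕ}
    (A : Matrix (Fin n) (Fin n) ℝ) (B : Matrix (Fin n) (Fin m) ℝ)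
    (Ki : Matrix (Fin m) (Fin n) ℝ)
    (hKi : IsHurwitz (A - B * Ki))
    (W : Matrix (SymIdx n) (Fin n × Fin n) ℝ)
    (hW : ∀ x y : Fin n → ℝ, Bfun x y = W.mulVec (kron x y))
    (Wr : Matrix (Fin n × Fin n) (SymIdx n) ℝ)
    (hWr : ∀ x : Fin n → ℝ, kron x x = Wr.mulVec (Bfun x x))
    (f : (Fin n → ℝ) → (Fin n → ℝ)) (g : (Fin n → ℝ) → Matrix (Fin n) (Fin m) ℝ)
    (u : ℝ → (Fin m → ℝ)) (x : ℝ → (Fin n → ℝ))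
    (hf : Continuous f) (hg : Continuous g) (hu : Continuous u)
    (hx : ∀ τ : ℝ, HasDerivAt x (f (x τ) + (g (x τ)).mulVec (u τ)) τ)
    (t : Fin (l + 1) → ℝ) (ht : StrictMono t)
    (IB Θ : Matrix (Fin l) (SymIdx n) ℝ)
    (hIB : ∀ k : Fin l,
      IB k = ∫ τ in t k.castSucc..t k.succ, Bfun (x τ) (x τ))
    (hΘ : ∀ k : Fin l,
      Θ k = Bfun (x (t k.succ) + x (t k.castSucc)) (x (t k.succ) - x (t k.castSucc)) -
        (2 : ℝ) • ((W * ((1 : Matrix (Fin n) (Fin n) ℝ) ⊗ₖ (B * Ki)) * Wr).mulVec (IB k) +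
          (∫ τ in t k.castSucc..t k.succ, Bfun (x τ) ((g (x τ)).mulVec (u τ))) +
          (∫ τ in t k.castSucc..t k.succ, Bfun (x τ) (f (x τ) - A.mulVec (x τ)))))
    (hIBrank : ∀ c : SymIdx n → ℝ, IB.mulVec c = 0 → c = 0) :
    ∀ c : SymIdx n → ℝ, Θ.mulVec c = 0 → c = 0 :=
  eirl_theta_full_rank_general A B Ki hKi W hW Wr hWr f g u x hf hg hu hx t IB Θ hIB hΘ hIBrank
end

section
/- Let K_i be stabilizing and P_i = P_i^T > 0 solve (A − BK_i)^T P_i + P_i(A − BK_i) + K_i^T R K_i + Q = 0. Then for any K ∈ R^{m×n}, the identity (A − BK)^T P_i + P_i(A − BK) + K^T R K + Q = (K − K_{i+1})^T R (K − K_{i+1}) − (K_i − K_{i+1})^T R (K_i − K_{i+1}) + (K − K_i)^T R K_i + K_i^T R (K − K_i) − (K − K_i)^T R (K − K_i) + ... simplifies to: (A − BK_{i+1})^T P_i + P_i(A − BK_{i+1}) = −Q − K_{i+1}^T R K_{i+1} − (K_{i+1} − K_i)^T R (K_{i+1} − K_i), where K_{i+1} = R^{-1} B^T P_i. -/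
open Matrix

/-! Since `Bᵀ Pᵢ = R Kᵢ₊₁`, the cross terms `-Kᵀ Bᵀ Pᵢ - Pᵢ B K` of the closed-loop Lyapunov
expression for an arbitrary gain `K` become `-Kᵀ R Kᵢ₊₁ - Kᵢ₊₁ᵀ R K`, and completing the square
in `K` around `Kᵢ₊₁` separates off `(K - Kᵢ₊₁)ᵀ R (K - Kᵢ₊₁)`. Taking `K = Kᵢ` and using the
Lyapunov equation for `Kᵢ` gives the identity. -/

namespace Matrix

variable {ι κ α : Type*} [Fintype ι] [Fintype κ] [CommRing α]

theorem lyapunov_add_quadForm_eq_of_transpose_mul_eq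
    {A P : Matrix ι ι α} {B : Matrix ι κ α} {R : Matrix κ κ α} {L : Matrix κ ι α}
    (hP : P.IsSymm) (hR : R.IsSymm) (hBP : Bᵀ * P = R * L) (K : Matrix κ ι α) :
    (A - B * K)ᵀ * P + P * (A - B * K) + Kᵀ * R * K =
      (A - B * L)ᵀ * P + P * (A - B * L) + Lᵀ * R * L + (L - K)ᵀ * R * (L - K) := by
  have hPB : P * B = Lᵀ * R := by
    simpa only [transpose_mul, transpose_transpose, hP.eq, hR.eq] using congrArg transpose hBP
  simp only [transpose_sub, transpose_mul, Matrix.sub_mul, Matrix.mul_sub]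
  rw [Matrix.mul_assoc Kᵀ, Matrix.mul_assoc Lᵀ Bᵀ, hBP, ← Matrix.mul_assoc P B K,
    ← Matrix.mul_assoc P B L, hPB]
  simp only [Matrix.mul_assoc]
  abel

end Matrix

theorem kleinman_completing_square_general {n m : ℕ}
    (A : Matrix (Fin n) (Fin n) ℝ) (B : Matrix (Fin n) (Fin m) ℝ)
    (Q : Matrix (Fin n) (Fin n) ℝ) (R : Matrix (Fin m) (Fin m) ℝ)
    (Ki Kip : Matrix (Fin m) (Fin n) ℝ) (Pi : Matrix (Fin n) (Fin n) ℝ)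
    (hR : R.IsSymm) (hRpd : R.PosDef)
    (hPi : Pi.IsSymm)
    (hALE : (A - B * Ki)ᵀ * Pi + Pi * (A - B * Ki) + Kiᵀ * R * Ki + Q = 0)
    (hKip : Kip = R⁻¹ * Bᵀ * Pi) :
    (A - B * Kip)ᵀ * Pi + Pi * (A - B * Kip) =
      -Q - Kipᵀ * R * Kip - (Kip - Ki)ᵀ * R * (Kip - Ki) := by
  have hBP : Bᵀ * Pi = R * Kip := by
    rw [hKip, Matrix.mul_assoc R⁻¹,
      mul_nonsing_inv_cancel_left _ _ ((isUnit_iff_isUnit_det R).mp hRpd.isUnit)]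
  rw [lyapunov_add_quadForm_eq_of_transpose_mul_eq hPi hR hBP Ki] at hALE
  rw [← sub_eq_zero, ← hALE]
  abel

/-- Completing-the-square identity of Kleinman's algorithm: if `Pᵢ` is symmetric and solves
the closed-loop Lyapunov equation for the stabilizing gain `Kᵢ`, and `Kᵢ₊₁ = R⁻¹ Bᵀ Pᵢ`,
then `(A − B Kᵢ₊₁)ᵀ Pᵢ + Pᵢ (A − B Kᵢ₊₁)
  = −Q − Kᵢ₊₁ᵀ R Kᵢ₊₁ − (Kᵢ₊₁ − Kᵢ)ᵀ R (Kᵢ₊₁ − Kᵢ)`. -/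
theorem kleinman_completing_square {n m : ℕ}
    (A : Matrix (Fin n) (Fin n) ℝ) (B : Matrix (Fin n) (Fin m) ℝ)
    (Q : Matrix (Fin n) (Fin n) ℝ) (R : Matrix (Fin m) (Fin m) ℝ)
    (Ki Kip : Matrix (Fin m) (Fin n) ℝ) (Pi : Matrix (Fin n) (Fin n) ℝ)
    (hQ : Q.IsSymm) (hR : R.IsSymm) (hRpd : R.PosDef)
    (hPi : Pi.IsSymm)
    (hALE : (A - B * Ki)ᵀ * Pi + Pi * (A - B * Ki) + Kiᵀ * R * Ki + Q = 0)
    (hKip : Kip = R⁻¹ * Bᵀ * Pi) :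
    (A - B * Kip)ᵀ * Pi + Pi * (A - B * Kip) =
      -Q - Kipᵀ * R * Kip - (Kip - Ki)ᵀ * R * (Kip - Ki) :=
  kleinman_completing_square_general A B Q R Ki Kip Pi hR hRpd hPi hALE hKip
end
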